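/- Under a uniform prior, the posterior probability of the state (V¹=1, V²=0) given that the first backer pledged to project 1 equals a₁(1+a₁)/3, where a₁ = p₁² + (1−p₁)² and p₁ is the first backer's expertness. -/
import Mathlib


open Finset

/-- Probability of signal pair `s` given quality state `V` for a backer with expertness `p`:
signals are independent per project and correct with probability `p`
(`true` = high quality / high signal). -/
noncomputable def sigProb (p : ℝ) (V s : Bool × Bool) : ℝ :=
  (if s.1 = V.1 then p else 1 - p) * (if s.2 = V.2 then p else 1 - p)

/-- Bayesian posterior over quality state `V` given own signals `s`, uniform prior. -/
noncomputable def post (p : ℝ) (s V : Bool × Bool) : ℝ :=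
  sigProb p V s / ∑ V' : Bool × Bool, sigProb p V' s

/-- Probability of pledging to project 1 given own signals `s`. -/
noncomputable def pledge1 (p : ℝ) (s : Bool × Bool) : ℝ :=
  post p s (true, false) + (1/2) * post p s (true, true)

/-- Probability of pledging to project 2 given own signals `s`. -/
noncomputable def pledge2 (p : ℝ) (s : Bool × Bool) : ℝ :=
  post p s (false, true) + (1/2) * post p s (true, true)

/-- Probability of abstaining given own signals `s`. -/
noncomputable def abstain (p : ℝ) (s : Bool × Bool) : ℝ :=
  post p s (false, false)

/-- Unconditional (on signals) probability of pledging to project 1 in state `V`. -/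
noncomputable def condPledge1 (p : ℝ) (V : Bool × Bool) : ℝ :=
  ∑ s : Bool × Bool, sigProb p V s * pledge1 p s

/-- Unconditional probability of pledging to project 2 in state `V`. -/
noncomputable def condPledge2 (p : ℝ) (V : Bool × Bool) : ℝ :=
  ∑ s : Bool × Bool, sigProb p V s * pledge2 p s

/-- Unconditional probability of abstaining in state `V`. -/
noncomputable def condAbstain (p : ℝ) (V : Bool × Bool) : ℝ :=
  ∑ s : Bool × Bool, sigProb p V s * abstain p s

/-- Posterior over quality state `V` given only that the first backer (expertness `p`)
pledged to project 1, under a uniform prior. -/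
noncomputable def postObsPledge1 (p : ℝ) (V : Bool × Bool) : ℝ :=
  condPledge1 p V / ∑ V' : Bool × Bool, condPledge1 p V'

/-- Posterior over quality state `V` given only that the first backer abstained,
under a uniform prior. -/
noncomputable def postObsAbstain (p : ℝ) (V : Bool × Bool) : ℝ :=
  condAbstain p V / ∑ V' : Bool × Bool, condAbstain p V'


lemma sumSig (p : ℝ) (s : Bool × Bool) : ∑ V : Bool × Bool, sigProb p V s = 1 := by
  obtain ⟨a, b⟩ := s
  cases a <;> cases b <;> simp [sigProb, Fintype.sum_prod_type] <;> ring

/-- P(V = (1,0) | x₁ = 1) = a₁(1+a₁)/3 with a₁ = p₁² + (1−p₁)². -/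
theorem stmt8 (p : ℝ) (hp : 1/2 ≤ p) (hp1 : p ≤ 1) :
    postObsPledge1 p (true, false)
      = (p^2 + (1-p)^2) * (1 + (p^2 + (1-p)^2)) / 3 := by
  have h : ∀ s V : Bool × Bool, post p s V = sigProb p V s := by
    intro s V
    simp [post, sumSig]
  simp only [postObsPledge1, condPledge1, pledge1, h, Fintype.sum_prod_type, sigProb]
  norm_num
  ring_nf
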